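/- The additional flows commute with all the flows of the extended KP hierarchy: for every m ≥ 0, p ∈ ℤ, k ≥ 1, for β̇_{mp} ∈ {β_{mp}, β̂_{mp}} and t̄_k ∈ {t_k, t̂_k}, one has [∂/∂β̇_{mp}, ∂/∂t̄_k] Φ̃ = 0, where Φ̃ = Φ or Φ̂. -/

import Mathlib

/-!
A flow `∂` acting on a dressing operator by `∂Φ = A Φ` commutes with a second one, `∂'Φ = A' Φ`,
exactly when the zero-curvature equation `∂A' - ∂'A = ⁅A, A'⁆` holds. For `A = -(X)₋` on `Φ` and
`A = (X)₊` on `Φ̂` both reduce, since `(·)₊` and `(·)₋` project onto subalgebras, to the single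
identity `∂X' - ∂'X = ⁅X₊, X'₊⁆ - ⁅X₋, X'₋⁆` between the generators, and this follows from the Lax
equations `∂X' = ⁅-X₋, X'⁆`, `∂'X = ⁅X'₊, X⁆` (mirrored for the `t̂`-flows).

The Lax equations come from dressing: if a flow acts on `ξ` as `⁅η, ·⁆`, it acts on `Φ ξ Φ⁻¹` as
`⁅A + Φ η Φ⁻¹, ·⁆`; the `ξ` on which it acts as `⁅η, ·⁆` form a subring closed under inverses, and
`⁅∂, Ξ⁆ = 1` gives `⁅∂ⁿ, Ξ⁆ = n ∂ⁿ⁻¹`, which writes the flows of `Ξ` and `Ξ̂` in that form.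
-/

namespace ExtendedKP

variable {D : Type*} [Ring D]

theorem conj_mul_conj (u : Dˣ) (a b : D) :
    ↑u * a * ↑u⁻¹ * (↑u * b * ↑u⁻¹) = ↑u * (a * b) * ↑u⁻¹ := by
  simp [mul_assoc]

theorem val_conj_zpow (Φ u : Dˣ) (n : ℤ) :
    (↑((Φ * u * Φ⁻¹) ^ n) : D) = ↑Φ * ↑(u ^ n) * ↑Φ⁻¹ := by
  rw [conj_zpow]; rfl

theorem lie_units_zpow_eq {u : Dˣ} {x : D} (hux : ⁅(u : D), x⁆ = 1) (n : ℤ) :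
    ⁅(↑(u ^ n) : D), x⁆ = n • ↑(u ^ (n - 1)) := by
  set h : ℤ → D := fun n => ⁅(↑(u ^ n) : D), x⁆ - n • ↑(u ^ (n - 1)) with h_def
  have step : ∀ n, h (n + 1) = h n * u := by
    intro n
    have hprev : (↑(u ^ (n - 1)) : D) * u = ↑(u ^ n) := by
      rw [← Units.val_mul, ← zpow_add_one, sub_add_cancel]
    have hux' : (u : D) * x = x * u + 1 := by rw [← hux, Ring.lie_def]; abel
    simp only [h_def, zpow_add_one, add_sub_cancel_right, Units.val_mul, Ring.lie_def, sub_mul,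
      smul_mul_assoc, hprev, mul_assoc, hux', mul_add, mul_one, add_smul, one_smul]
    noncomm_ring
  suffices h n = 0 from sub_eq_zero.mp this
  induction n with
  | zero => simp [h_def, Ring.lie_def]
  | succ i ih => rw [step, ih, zero_mul]
  | pred i ih => rwa [← (Units.mul_left_eq_zero u), ← step, sub_add_cancel]

structure IsDerivation (d : D → D) : Prop where
  map_add : ∀ x y, d (x + y) = d x + d y
  map_mul : ∀ x y, d (x * y) = d x * y + x * d y

namespace IsDerivation

variable {d : D → D}

theorem map_zero (hd : IsDerivation d) : d 0 = 0 := (AddMonoidHom.mk' d hd.map_add).map_zero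

theorem map_neg (hd : IsDerivation d) (x : D) : d (-x) = -d x :=
  (AddMonoidHom.mk' d hd.map_add).map_neg x

theorem map_sub (hd : IsDerivation d) (x y : D) : d (x - y) = d x - d y :=
  (AddMonoidHom.mk' d hd.map_add).map_sub x y

theorem map_one (hd : IsDerivation d) : d 1 = 0 := by simpa using hd.map_mul 1 1

theorem map_units_inv (hd : IsDerivation d) (u : Dˣ) : d ↑u⁻¹ = -(↑u⁻¹ * d u * ↑u⁻¹) := by
  have h := hd.map_mul ↑u ↑u⁻¹
  rw [u.mul_inv, hd.map_one] at h
  calc d ↑u⁻¹ = ↑u⁻¹ * (↑u * d ↑u⁻¹) := by rw [← mul_assoc, u.inv_mul, one_mul]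
    _ = ↑u⁻¹ * -(d ↑u * ↑u⁻¹) := by rw [eq_neg_of_add_eq_zero_right h.symm]
    _ = _ := by noncomm_ring

theorem map_map_comm_of_flat {d' : D → D} (hd : IsDerivation d) (hd' : IsDerivation d')
    {Φ A A' : D} (hΦ : d Φ = A * Φ) (hΦ' : d' Φ = A' * Φ) (hflat : d A' - d' A = ⁅A, A'⁆) :
    d (d' Φ) = d' (d Φ) := by
  rw [hΦ', hΦ, hd.map_mul, hd'.map_mul, hΦ, hΦ', eq_add_of_sub_eq' hflat, Ring.lie_def]
  noncomm_ring

def adLocus (hd : IsDerivation d) (η : D) : Subring D where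
  carrier := {x | d x = ⁅η, x⁆}
  mul_mem' {x y} (hx : d x = _) (hy : d y = _) := by
    change d (x * y) = _
    rw [hd.map_mul, hx, hy, Ring.lie_def, Ring.lie_def, Ring.lie_def]
    noncomm_ring
  one_mem' := by simp [hd.map_one, Ring.lie_def]
  add_mem' {x y} (hx : d x = _) (hy : d y = _) := by
    change d (x + y) = _
    rw [hd.map_add, hx, hy, Ring.lie_def, Ring.lie_def, Ring.lie_def]
    noncomm_ring
  zero_mem' := by simp [hd.map_zero, Ring.lie_def]
  neg_mem' {x} (hx : d x = _) := by
    change d (-x) = _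
    rw [hd.map_neg, hx, Ring.lie_def, Ring.lie_def]
    noncomm_ring

theorem mem_adLocus (hd : IsDerivation d) {η x : D} : x ∈ hd.adLocus η ↔ d x = ⁅η, x⁆ :=
  Iff.rfl

theorem units_inv_mem_adLocus (hd : IsDerivation d) {η : D} {u : Dˣ}
    (hu : ↑u ∈ hd.adLocus η) : ↑u⁻¹ ∈ hd.adLocus η := by
  rw [mem_adLocus] at hu ⊢
  simp [hd.map_units_inv, hu, Ring.lie_def, mul_sub, sub_mul, mul_assoc]

theorem zpow_mem_adLocus (hd : IsDerivation d) {η : D} {u : Dˣ}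
    (hu : ↑u ∈ hd.adLocus η) : ∀ n : ℤ, ↑(u ^ n) ∈ hd.adLocus η
  | .ofNat n => by simpa using pow_mem hu n
  | .negSucc n => by
    rw [zpow_negSucc]
    exact hd.units_inv_mem_adLocus (by simpa using pow_mem hu (n + 1))

theorem conj_mem_adLocus (hd : IsDerivation d) {Φ : Dˣ} {W ξ η : D} (hΦ : d Φ = W * Φ)
    (hξ : ξ ∈ hd.adLocus η) : ↑Φ * ξ * ↑Φ⁻¹ ∈ hd.adLocus (W + ↑Φ * η * ↑Φ⁻¹) := by
  have hΦinv : ↑Φ⁻¹ * (W * ↑Φ) * ↑Φ⁻¹ = ↑Φ⁻¹ * W := by simp [mul_assoc]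
  rw [mem_adLocus] at hξ ⊢
  rw [hd.map_mul, hd.map_mul, hΦ, hd.map_units_inv, hΦ, hΦinv, hξ, Ring.lie_def, Ring.lie_def]
  simp only [add_mul, mul_add, conj_mul_conj]
  noncomm_ring

theorem dressed_zpow_mem_adLocus (hd : IsDerivation d) {u Φ : Dˣ} {W : D} (hu : d u = 0)
    (hΦ : d Φ = W * Φ) (n : ℤ) : ↑((Φ * u * Φ⁻¹) ^ n) ∈ hd.adLocus W := by
  have hu' : ↑u ∈ hd.adLocus 0 := by simp [mem_adLocus, hu, Ring.lie_def]
  simpa [val_conj_zpow] using hd.conj_mem_adLocus hΦ (hd.zpow_mem_adLocus hu' n)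

theorem dressed_mem_adLocus (hd : IsDerivation d) {u Φ : Dˣ} {ξ η W V : D}
    (hu : ↑u ∈ hd.adLocus η) (hξ : ξ ∈ hd.adLocus η) (hΦ : d Φ = W * Φ)
    (hV : W + ↑Φ * η * ↑Φ⁻¹ = V) (m : ℕ) (n : ℤ) :
    (↑Φ * ξ * ↑Φ⁻¹) ^ m * ↑((Φ * u * Φ⁻¹) ^ n) ∈ hd.adLocus V := by
  rw [Units.conj_pow, val_conj_zpow, conj_mul_conj, ← hV]
  exact hd.conj_mem_adLocus hΦ (mul_mem (pow_mem hξ m) (hd.zpow_mem_adLocus hu n))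

end IsDerivation

structure IsSplitting (pos neg : D → D) : Prop where
  pos_add_neg : ∀ x, pos x + neg x = x
  map_add : ∀ x y, pos (x + y) = pos x + pos y
  pos_mul_pos : ∀ x y, pos (pos x * pos y) = pos x * pos y
  neg_mul_neg : ∀ x y, neg (neg x * neg y) = neg x * neg y

/-- The Lie bracket `⁅x, y⁆_R` of the classical r-matrix `R = pos - neg`. -/
def rBracket (pos neg : D → D) (x y : D) : D := ⁅pos x, pos y⁆ - ⁅neg x, neg y⁆

namespace IsSplitting

variable {pos neg : D → D}

theorem neg_eq (hs : IsSplitting pos neg) (x : D) : neg x = x - pos x :=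
  eq_sub_of_add_eq' (hs.pos_add_neg x)

theorem map_sub (hs : IsSplitting pos neg) (x y : D) : pos (x - y) = pos x - pos y :=
  (AddMonoidHom.mk' pos hs.map_add).map_sub x y

theorem neg_map_sub (hs : IsSplitting pos neg) (x y : D) : neg (x - y) = neg x - neg y := by
  rw [hs.neg_eq, hs.neg_eq, hs.neg_eq, hs.map_sub]
  abel

theorem neg_add_self (hs : IsSplitting pos neg) (x : D) : -neg x + x = pos x := by
  rw [hs.neg_eq]
  abel

theorem pos_rBracket (hs : IsSplitting pos neg) (x y : D) :
    pos (rBracket pos neg x y) = ⁅pos x, pos y⁆ := by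
  have pos_neg_mul_neg : ∀ a b, pos (neg a * neg b) = 0 := fun a b => by
    simpa [hs.neg_mul_neg] using hs.pos_add_neg (neg a * neg b)
  simp only [rBracket, Ring.lie_def, hs.map_sub, hs.pos_mul_pos, pos_neg_mul_neg, sub_zero]

theorem neg_rBracket (hs : IsSplitting pos neg) (x y : D) :
    neg (rBracket pos neg x y) = -⁅neg x, neg y⁆ := by
  rw [hs.neg_eq, hs.pos_rBracket, rBracket]
  abel

theorem map_neg_of_map_pos (hs : IsSplitting pos neg) {d : D → D} (hd : IsDerivation d)
    (hdpos : ∀ x, d (pos x) = pos (d x)) (x : D) : d (neg x) = neg (d x) := by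
  rw [hs.neg_eq, hs.neg_eq, hd.map_sub, hdpos]

theorem sub_eq_rBracket_of_lax (hs : IsSplitting pos neg) {a b x y : D}
    (ha : a = ⁅-neg x, y⁆) (hb : b = ⁅pos y, x⁆) : a - b = rBracket pos neg x y := by
  have key : ∀ p n q m : D, ⁅-n, q + m⁆ - ⁅q, p + n⁆ = ⁅p, q⁆ - ⁅n, m⁆ := by
    intros; simp only [Ring.lie_def]; noncomm_ring
  rw [ha, hb, rBracket, ← key (pos x) (neg x) (pos y) (neg y), hs.pos_add_neg, hs.pos_add_neg]

theorem sub_eq_rBracket_of_lax' (hs : IsSplitting pos neg) {a b x y : D}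
    (ha : a = ⁅pos x, y⁆) (hb : b = ⁅-neg y, x⁆) : a - b = rBracket pos neg x y := by
  rw [← neg_sub, hs.sub_eq_rBracket_of_lax hb ha, rBracket, rBracket, Ring.lie_def, Ring.lie_def,
    Ring.lie_def, Ring.lie_def]
  noncomm_ring

theorem map_map_comm_of_rBracket (hs : IsSplitting pos neg) {d d' : D → D} (hd : IsDerivation d)
    (hd' : IsDerivation d') (hdpos : ∀ x, d (pos x) = pos (d x))
    (hdpos' : ∀ x, d' (pos x) = pos (d' x)) {X X' Φ Φh Z : D}
    (hR : d X' - d' X = rBracket pos neg X X')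
    (hΦ : d Φ = -neg X * Φ) (hΦ' : d' Φ = -neg X' * Φ)
    (hΦh : d Φh = pos X * Φh) (hΦh' : d' Φh = (pos X' - Z) * Φh) (hZ : d Z = ⁅pos X, Z⁆) :
    d (d' Φ) = d' (d Φ) ∧ d (d' Φh) = d' (d Φh) := by
  constructor
  · refine hd.map_map_comm_of_flat hd' hΦ hΦ' ?_
    calc d (-neg X') - d' (-neg X) = -neg (d X' - d' X) := by
          rw [hd.map_neg, hd'.map_neg, hs.map_neg_of_map_pos hd hdpos,
            hs.map_neg_of_map_pos hd' hdpos', hs.neg_map_sub]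
          abel
      _ = ⁅-neg X, -neg X'⁆ := by
          rw [hR, hs.neg_rBracket, Ring.lie_def, Ring.lie_def]
          noncomm_ring
  · refine hd.map_map_comm_of_flat hd' hΦh hΦh' ?_
    calc d (pos X' - Z) - d' (pos X) = pos (d X' - d' X) - d Z := by
          rw [hd.map_sub, hdpos, hdpos', hs.map_sub]
          abel
      _ = ⁅pos X, pos X' - Z⁆ := by
          rw [hR, hs.pos_rBracket, hZ, Ring.lie_def, Ring.lie_def, Ring.lie_def]
          noncomm_ring

end IsSplitting

section Dressing

variable {pos neg : D → D} {d : D → D} {del Φ Φh : Dˣ} {Ξ Ξh : D}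

theorem lax_additional_flow (hd : IsDerivation d) {W W' : D} (hdel : d del = 0)
    (hΦ : d Φ = W * Φ) (hΦh : d Φh = W' * Φh) (k : ℕ) :
    d ↑((Φ * del * Φ⁻¹) ^ k) = ⁅W, ↑((Φ * del * Φ⁻¹) ^ k)⁆ ∧
    d ↑((Φh * del⁻¹ * Φh⁻¹) ^ k) = ⁅W', ↑((Φh * del⁻¹ * Φh⁻¹) ^ k)⁆ ∧
    d (if k = 1 then ↑(Φh * del⁻¹ * Φh⁻¹)⁻¹ else 0)
      = ⁅W', if k = 1 then ↑(Φh * del⁻¹ * Φh⁻¹)⁻¹ else 0⁆ := by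
  have hdel' : d ↑del⁻¹ = 0 := by simp [hd.map_units_inv, hdel]
  refine ⟨by simpa [hd.mem_adLocus] using hd.dressed_zpow_mem_adLocus hdel hΦ k,
    by simpa [hd.mem_adLocus] using hd.dressed_zpow_mem_adLocus hdel' hΦh k, ?_⟩
  split_ifs
  · simpa [hd.mem_adLocus] using hd.dressed_zpow_mem_adLocus hdel' hΦh (-1)
  · simp [hd.map_zero, Ring.lie_def]

theorem lax_t_flow (hs : IsSplitting pos neg) (hd : IsDerivation d) {k : ℕ} (hdel : d del = 0)
    (hΞdel : ⁅(del : D), Ξ⁆ = 1) (hΞhdel : ⁅(del : D), Ξh⁆ = 1)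
    (hΞ : d Ξ = (k : ℤ) • ((del ^ ((k : ℤ) - 1) : Dˣ) : D)) (hΞh : d Ξh = if k = 1 then 1 else 0)
    (hΦ : d Φ = -neg ↑((Φ * del * Φ⁻¹) ^ k) * Φ)
    (hΦh : d Φh = (pos ↑((Φ * del * Φ⁻¹) ^ k)
      - if k = 1 then ↑(Φh * del⁻¹ * Φh⁻¹)⁻¹ else 0) * Φh) (m : ℕ) (p : ℤ) :
    d ((↑Φ * Ξ * ↑Φ⁻¹) ^ m * ↑((Φ * del * Φ⁻¹) ^ p))
      = ⁅pos ↑((Φ * del * Φ⁻¹) ^ k), (↑Φ * Ξ * ↑Φ⁻¹) ^ m * ↑((Φ * del * Φ⁻¹) ^ p)⁆ ∧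
    d ((↑Φh * Ξh * ↑Φh⁻¹) ^ m * ↑((Φh * del⁻¹ * Φh⁻¹) ^ (-p)))
      = ⁅pos ↑((Φ * del * Φ⁻¹) ^ k),
          (↑Φh * Ξh * ↑Φh⁻¹) ^ m * ↑((Φh * del⁻¹ * Φh⁻¹) ^ (-p))⁆ := by
  constructor
  · refine hd.dressed_mem_adLocus (η := ↑(del ^ (k : ℤ))) ?_ ?_ hΦ ?_ m p
    · rw [hd.mem_adLocus, hdel, ((Commute.refl (del : D)).units_zpow_left _).lie_eq]
    · rw [hd.mem_adLocus, hΞ, lie_units_zpow_eq hΞdel]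
    · rw [← val_conj_zpow, zpow_natCast, hs.neg_add_self]
  -- `η = δ_{k1} del` dresses to the correction term `Ph⁻¹` of the `t₁`-flow on `Φh`.
  · refine hd.dressed_mem_adLocus (η := if k = 1 then ↑del else 0) ?_ ?_ hΦh ?_ m (-p)
    · split_ifs <;> simp [hd.mem_adLocus, hd.map_units_inv, hdel, Ring.lie_def]
    · split_ifs <;> simp_all [hd.mem_adLocus, Ring.lie_def]
    · have hinv : (Φh * del⁻¹ * Φh⁻¹)⁻¹ = Φh * del * Φh⁻¹ := by group
      split_ifs <;> simp [hinv]

theorem lax_hat_t_flow (hs : IsSplitting pos neg) (hd : IsDerivation d) {k : ℕ} (hdel : d del = 0)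
    (hΞhdel : ⁅(del : D), Ξh⁆ = 1) (hΞ : d Ξ = 0)
    (hΞh : d Ξh = (k : ℤ) • ((del ^ (-(k : ℤ) - 1) : Dˣ) : D))
    (hΦ : d Φ = -neg ↑((Φh * del⁻¹ * Φh⁻¹) ^ k) * Φ)
    (hΦh : d Φh = pos ↑((Φh * del⁻¹ * Φh⁻¹) ^ k) * Φh) (m : ℕ) (p : ℤ) :
    d ((↑Φ * Ξ * ↑Φ⁻¹) ^ m * ↑((Φ * del * Φ⁻¹) ^ p))
      = ⁅-neg ↑((Φh * del⁻¹ * Φh⁻¹) ^ k), (↑Φ * Ξ * ↑Φ⁻¹) ^ m * ↑((Φ * del * Φ⁻¹) ^ p)⁆ ∧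
    d ((↑Φh * Ξh * ↑Φh⁻¹) ^ m * ↑((Φh * del⁻¹ * Φh⁻¹) ^ (-p)))
      = ⁅-neg ↑((Φh * del⁻¹ * Φh⁻¹) ^ k),
          (↑Φh * Ξh * ↑Φh⁻¹) ^ m * ↑((Φh * del⁻¹ * Φh⁻¹) ^ (-p))⁆ := by
  constructor
  · refine hd.dressed_mem_adLocus (η := 0) ?_ ?_ hΦ (by simp) m p
    · simp [hd.mem_adLocus, hdel, Ring.lie_def]
    · simp [hd.mem_adLocus, hΞ, Ring.lie_def]
  · refine hd.dressed_mem_adLocus (η := -↑(del⁻¹ ^ (k : ℤ))) ?_ ?_ hΦh ?_ m (-p)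
    · rw [hd.mem_adLocus, hd.map_units_inv, hdel,
        ((Commute.refl _).units_zpow_left _).neg_left.lie_eq]
      simp
    · have h := lie_units_zpow_eq hΞhdel (-k)
      rw [Ring.lie_def] at h
      rw [hd.mem_adLocus, hΞh, inv_zpow', Ring.lie_def, neg_mul, mul_neg, neg_sub_neg,
        ← neg_sub (_ * Ξh), h, neg_smul, neg_neg]
    · rw [mul_neg, neg_mul, ← val_conj_zpow, zpow_natCast, hs.neg_eq]
      abel

end Dressing

end ExtendedKP

open ExtendedKP

theorem stmt_16_general {D : Type*} [Ring D]
    (pos neg : D → D)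
    (hsplit : ∀ x, pos x + neg x = x)
    (hpos_add : ∀ x y, pos (x + y) = pos x + pos y)
    (hpos_mul : ∀ x y, pos (pos x * pos y) = pos x * pos y)
    (hneg_mul : ∀ x y, neg (neg x * neg y) = neg x * neg y)
    (del Φ Φh : Dˣ)
    -- the hierarchy flows
    (T Th : ℕ → D → D)
    (hT_add : ∀ k x y, T k (x + y) = T k x + T k y)
    (hT_mul : ∀ k x y, T k (x * y) = T k x * y + x * T k y)
    (hT_pos : ∀ k x, T k (pos x) = pos (T k x))
    (hT_del : ∀ k, T k (del : D) = 0)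
    (hTh_add : ∀ k x y, Th k (x + y) = Th k x + Th k y)
    (hTh_mul : ∀ k x y, Th k (x * y) = Th k x * y + x * Th k y)
    (hTh_pos : ∀ k x, Th k (pos x) = pos (Th k x))
    (hTh_del : ∀ k, Th k (del : D) = 0)
    -- the operators Ξ and Ξ̂ entering the Orlov–Schulman operators
    (Ξ Ξh : D)
    (hΞ_del : (del : D) * Ξ - Ξ * (del : D) = 1)
    (hΞh_del : (del : D) * Ξh - Ξh * (del : D) = 1)
    (hΞ_T : ∀ k : ℕ, 1 ≤ k →
      T k Ξ = (k : ℤ) • ((del ^ ((k : ℤ) - 1) : Dˣ) : D))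
    (hΞ_Th : ∀ k : ℕ, 1 ≤ k → Th k Ξ = 0)
    (hΞh_T : ∀ k : ℕ, 1 ≤ k → T k Ξh = if k = 1 then 1 else 0)
    (hΞh_Th : ∀ k : ℕ, 1 ≤ k →
      Th k Ξh = (k : ℤ) • ((del ^ (-(k : ℤ) - 1) : Dˣ) : D))
    -- the additional flows
    (S Sh : ℕ → ℤ → D → D)
    (hS_add : ∀ m p x y, S m p (x + y) = S m p x + S m p y)
    (hS_mul : ∀ m p x y, S m p (x * y) = S m p x * y + x * S m p y)
    (hS_pos : ∀ m p x, S m p (pos x) = pos (S m p x))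
    (hS_del : ∀ m p, S m p (del : D) = 0)
    (hSh_add : ∀ m p x y, Sh m p (x + y) = Sh m p x + Sh m p y)
    (hSh_mul : ∀ m p x y, Sh m p (x * y) = Sh m p x * y + x * Sh m p y)
    (hSh_pos : ∀ m p x, Sh m p (pos x) = pos (Sh m p x))
    (hSh_del : ∀ m p, Sh m p (del : D) = 0)
    -- the hierarchy flows do not move the additional times and vice versa,
    -- i.e. the mixed action is computed on the same dressing operators:
    :
    let P : Dˣ := Φ * del * Φ⁻¹
    let Ph : Dˣ := Φh * del⁻¹ * Φh⁻¹
    let M : D := (Φ : D) * Ξ * ((Φ⁻¹ : Dˣ) : D)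
    let Mh : D := (Φh : D) * Ξh * ((Φh⁻¹ : Dˣ) : D)
    let Bop : ℕ → ℤ → D := fun m p => M ^ m * ((P ^ p : Dˣ) : D)
    let Bhop : ℕ → ℤ → D := fun m p => Mh ^ m * ((Ph ^ (-p) : Dˣ) : D)
    -- the extended KP hierarchy:
    (∀ k : ℕ, 1 ≤ k →
      T k (Φ : D) = -(neg ((P ^ k : Dˣ) : D)) * (Φ : D)) →
    (∀ k : ℕ, 1 ≤ k →
      T k (Φh : D)
        = (pos ((P ^ k : Dˣ) : D) - (if k = 1 then ((Ph⁻¹ : Dˣ) : D) else 0))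
            * (Φh : D)) →
    (∀ k : ℕ, 1 ≤ k →
      Th k (Φ : D) = -(neg ((Ph ^ k : Dˣ) : D)) * (Φ : D)) →
    (∀ k : ℕ, 1 ≤ k →
      Th k (Φh : D) = pos ((Ph ^ k : Dˣ) : D) * (Φh : D)) →
    -- the additional flows:
    (∀ (m : ℕ) (p : ℤ), S m p (Φ : D) = -(neg (Bop m p)) * (Φ : D)) →
    (∀ (m : ℕ) (p : ℤ), S m p (Φh : D) = pos (Bop m p) * (Φh : D)) →
    (∀ (m : ℕ) (p : ℤ), Sh m p (Φ : D) = -(neg (Bhop m p)) * (Φ : D)) →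
    (∀ (m : ℕ) (p : ℤ), Sh m p (Φh : D) = pos (Bhop m p) * (Φh : D)) →
    -- conclusion: the additional symmetries commute with the hierarchy flows
    (∀ (m : ℕ) (p : ℤ) (k : ℕ), 1 ≤ k →
      S m p (T k (Φ : D)) = T k (S m p (Φ : D)) ∧
      S m p (Th k (Φ : D)) = Th k (S m p (Φ : D)) ∧
      Sh m p (T k (Φ : D)) = T k (Sh m p (Φ : D)) ∧
      Sh m p (Th k (Φ : D)) = Th k (Sh m p (Φ : D)) ∧
      S m p (T k (Φh : D)) = T k (S m p (Φh : D)) ∧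
      S m p (Th k (Φh : D)) = Th k (S m p (Φh : D)) ∧
      Sh m p (T k (Φh : D)) = T k (Sh m p (Φh : D)) ∧
      Sh m p (Th k (Φh : D)) = Th k (Sh m p (Φh : D))) := by
  intro P Ph M Mh B Bh hTΦ hTΦh hThΦ hThΦh hSΦ hSΦh hShΦ hShΦh m p k hk
  have hs : IsSplitting pos neg := ⟨hsplit, hpos_add, hpos_mul, hneg_mul⟩
  have dS : IsDerivation (S m p) := ⟨hS_add m p, hS_mul m p⟩
  have dSh : IsDerivation (Sh m p) := ⟨hSh_add m p, hSh_mul m p⟩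
  have dT : IsDerivation (T k) := ⟨hT_add k, hT_mul k⟩
  have dTh : IsDerivation (Th k) := ⟨hTh_add k, hTh_mul k⟩
  obtain ⟨hSP, hSPh, hSZ⟩ := lax_additional_flow dS (hS_del m p) (hSΦ m p) (hSΦh m p) k
  obtain ⟨hShP, hShPh, hShZ⟩ := lax_additional_flow dSh (hSh_del m p) (hShΦ m p) (hShΦh m p) k
  obtain ⟨hTB, hTBh⟩ := lax_t_flow hs dT (hT_del k) hΞ_del hΞh_del (hΞ_T k hk) (hΞh_T k hk)
    (hTΦ k hk) (hTΦh k hk) m p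
  obtain ⟨hThB, hThBh⟩ := lax_hat_t_flow hs dTh (hTh_del k) hΞh_del (hΞ_Th k hk) (hΞh_Th k hk)
    (hThΦ k hk) (hThΦh k hk) m p
  have hThΦh' : Th k Φh = (pos ↑(Ph ^ k) - 0) * Φh := by rw [sub_zero]; exact hThΦh k hk
  obtain ⟨hSTΦ, hSTΦh⟩ := hs.map_map_comm_of_rBracket dS dT (hS_pos m p) (hT_pos k)
    (hs.sub_eq_rBracket_of_lax hSP hTB) (hSΦ m p) (hTΦ k hk) (hSΦh m p) (hTΦh k hk) hSZ
  obtain ⟨hShTΦ, hShTΦh⟩ := hs.map_map_comm_of_rBracket dSh dT (hSh_pos m p) (hT_pos k)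
    (hs.sub_eq_rBracket_of_lax hShP hTBh) (hShΦ m p) (hTΦ k hk) (hShΦh m p) (hTΦh k hk) hShZ
  obtain ⟨hSThΦ, hSThΦh⟩ := hs.map_map_comm_of_rBracket dS dTh (hS_pos m p) (hTh_pos k)
    (hs.sub_eq_rBracket_of_lax' hSPh hThB) (hSΦ m p) (hThΦ k hk) (hSΦh m p) hThΦh'
    (by simp [dS.map_zero, Ring.lie_def])
  obtain ⟨hShThΦ, hShThΦh⟩ := hs.map_map_comm_of_rBracket dSh dTh (hSh_pos m p) (hTh_pos k)
    (hs.sub_eq_rBracket_of_lax' hShPh hThBh) (hShΦ m p) (hThΦ k hk) (hShΦh m p) hThΦh'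
    (by simp [dSh.map_zero, Ring.lie_def])
  exact ⟨hSTΦ, hSThΦ, hShTΦ, hShThΦ, hSTΦh, hSThΦh, hShTΦh, hShThΦh⟩

theorem stmt_16 {D : Type*} [Ring D]
    (pos neg : D → D)
    (hsplit : ∀ x, pos x + neg x = x)
    (hpos_add : ∀ x y, pos (x + y) = pos x + pos y)
    (hpos_idem : ∀ x, pos (pos x) = pos x)
    (hpos_mul : ∀ x y, pos (pos x * pos y) = pos x * pos y)
    (hneg_mul : ∀ x y, neg (neg x * neg y) = neg x * neg y)
    (hpos_one : pos 1 = 1)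
    (del Φ Φh : Dˣ)
    (hdel_pos : pos (del : D) = (del : D))
    -- the hierarchy flows
    (T Th : ℕ → D → D)
    (hT_add : ∀ k x y, T k (x + y) = T k x + T k y)
    (hT_mul : ∀ k x y, T k (x * y) = T k x * y + x * T k y)
    (hT_pos : ∀ k x, T k (pos x) = pos (T k x))
    (hT_del : ∀ k, T k (del : D) = 0)
    (hTh_add : ∀ k x y, Th k (x + y) = Th k x + Th k y)
    (hTh_mul : ∀ k x y, Th k (x * y) = Th k x * y + x * Th k y)
    (hTh_pos : ∀ k x, Th k (pos x) = pos (Th k x))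
    (hTh_del : ∀ k, Th k (del : D) = 0)
    -- the operators Ξ and Ξ̂ entering the Orlov–Schulman operators
    (Ξ Ξh : D)
    (hΞ_del : (del : D) * Ξ - Ξ * (del : D) = 1)
    (hΞh_del : (del : D) * Ξh - Ξh * (del : D) = 1)
    (hΞ_T : ∀ k : ℕ, 1 ≤ k →
      T k Ξ = (k : ℤ) • ((del ^ ((k : ℤ) - 1) : Dˣ) : D))
    (hΞ_Th : ∀ k : ℕ, 1 ≤ k → Th k Ξ = 0)
    (hΞh_T : ∀ k : ℕ, 1 ≤ k → T k Ξh = if k = 1 then 1 else 0)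
    (hΞh_Th : ∀ k : ℕ, 1 ≤ k →
      Th k Ξh = (k : ℤ) • ((del ^ (-(k : ℤ) - 1) : Dˣ) : D))
    -- the additional flows
    (S Sh : ℕ → ℤ → D → D)
    (hS_add : ∀ m p x y, S m p (x + y) = S m p x + S m p y)
    (hS_mul : ∀ m p x y, S m p (x * y) = S m p x * y + x * S m p y)
    (hS_pos : ∀ m p x, S m p (pos x) = pos (S m p x))
    (hS_del : ∀ m p, S m p (del : D) = 0)
    (hS_Ξ : ∀ m p, S m p Ξ = 0) (hS_Ξh : ∀ m p, S m p Ξh = 0)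
    (hSh_add : ∀ m p x y, Sh m p (x + y) = Sh m p x + Sh m p y)
    (hSh_mul : ∀ m p x y, Sh m p (x * y) = Sh m p x * y + x * Sh m p y)
    (hSh_pos : ∀ m p x, Sh m p (pos x) = pos (Sh m p x))
    (hSh_del : ∀ m p, Sh m p (del : D) = 0)
    (hSh_Ξ : ∀ m p, Sh m p Ξ = 0) (hSh_Ξh : ∀ m p, Sh m p Ξh = 0)
    -- the hierarchy flows do not move the additional times and vice versa,
    -- i.e. the mixed action is computed on the same dressing operators:
    :
    let P : Dˣ := Φ * del * Φ⁻¹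
    let Ph : Dˣ := Φh * del⁻¹ * Φh⁻¹
    let M : D := (Φ : D) * Ξ * ((Φ⁻¹ : Dˣ) : D)
    let Mh : D := (Φh : D) * Ξh * ((Φh⁻¹ : Dˣ) : D)
    let Bop : ℕ → ℤ → D := fun m p => M ^ m * ((P ^ p : Dˣ) : D)
    let Bhop : ℕ → ℤ → D := fun m p => Mh ^ m * ((Ph ^ (-p) : Dˣ) : D)
    -- the extended KP hierarchy:
    (∀ k : ℕ, 1 ≤ k →
      T k (Φ : D) = -(neg ((P ^ k : Dˣ) : D)) * (Φ : D)) →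
    (∀ k : ℕ, 1 ≤ k →
      T k (Φh : D)
        = (pos ((P ^ k : Dˣ) : D) - (if k = 1 then ((Ph⁻¹ : Dˣ) : D) else 0))
            * (Φh : D)) →
    (∀ k : ℕ, 1 ≤ k →
      Th k (Φ : D) = -(neg ((Ph ^ k : Dˣ) : D)) * (Φ : D)) →
    (∀ k : ℕ, 1 ≤ k →
      Th k (Φh : D) = pos ((Ph ^ k : Dˣ) : D) * (Φh : D)) →
    -- the additional flows:
    (∀ (m : ℕ) (p : ℤ), S m p (Φ : D) = -(neg (Bop m p)) * (Φ : D)) →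
    (∀ (m : ℕ) (p : ℤ), S m p (Φh : D) = pos (Bop m p) * (Φh : D)) →
    (∀ (m : ℕ) (p : ℤ), Sh m p (Φ : D) = -(neg (Bhop m p)) * (Φ : D)) →
    (∀ (m : ℕ) (p : ℤ), Sh m p (Φh : D) = pos (Bhop m p) * (Φh : D)) →
    -- conclusion: the additional symmetries commute with the hierarchy flows
    (∀ (m : ℕ) (p : ℤ) (k : ℕ), 1 ≤ k →
      S m p (T k (Φ : D)) = T k (S m p (Φ : D)) ∧
      S m p (Th k (Φ : D)) = Th k (S m p (Φ : D)) ∧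
      Sh m p (T k (Φ : D)) = T k (Sh m p (Φ : D)) ∧
      Sh m p (Th k (Φ : D)) = Th k (Sh m p (Φ : D)) ∧
      S m p (T k (Φh : D)) = T k (S m p (Φh : D)) ∧
      S m p (Th k (Φh : D)) = Th k (S m p (Φh : D)) ∧
      Sh m p (T k (Φh : D)) = T k (Sh m p (Φh : D)) ∧
      Sh m p (Th k (Φh : D)) = Th k (Sh m p (Φh : D))) :=
  stmt_16_general pos neg hsplit hpos_add hpos_mul hneg_mul del Φ Φh T Th hT_add hT_mul hT_pos
    hT_del hTh_add hTh_mul hTh_pos hTh_del Ξ Ξh hΞ_del hΞh_del hΞ_T hΞ_Th hΞh_T hΞh_Th S Sh hS_add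
    hS_mul hS_pos hS_del hSh_add hSh_mul hSh_pos hSh_del
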